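/- There exist two positive solutions (x, x̃) and (x', x̃') of the equilateral pentagonal Siamese system such that (x' − x)/x > 5.9. (Thus the relative variation δ_e in the heights among the three isomeric equilateral pentagonal Siamese dipyramids exceeds 5.9.) -/

import Mathlib

/-- `(x, x̃) = p` is a positive solution of the equilateral pentagonal Siamese
system. -/
def EqPentSol (p : ℝ × ℝ) : Prop :=
  0 < p.1 ∧ p.1 < Real.sqrt 3 / 2 ∧ 0 < p.2 ∧ p.2 < Real.sqrt 3 / 2 ∧
  p.2 = (5 * p.1 ^ 4 - 5 * p.1 ^ 2 + 1) / (2 * (1 - p.1 ^ 2) ^ 2) ∧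
  p.1 = (5 * p.2 ^ 4 - 5 * p.2 ^ 2 + 1) / (2 * (1 - p.2 ^ 2) ^ 2)

/-!
The system says `x̃ = f x` and `x = f x̃` for `f x = (5x⁴ - 5x² + 1) / (2(1 - x²)²)`,
so a period-two point `x` of `f` yields the two solutions `(x, f x)` and `(f x, x)`.
By the intermediate value theorem `f` has a period-two point in `[0.0711, 0.0712]`,
and there `f x > 6.9 x`.
-/

open Set

noncomputable def siameseMap (x : ℝ) : ℝ :=
  (5 * x ^ 4 - 5 * x ^ 2 + 1) / (2 * (1 - x ^ 2) ^ 2)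

lemma continuousAt_siameseMap {x : ℝ} (hx : x ^ 2 ≠ 1) : ContinuousAt siameseMap x := by
  have hden : 2 * (1 - x ^ 2) ^ 2 ≠ 0 := by
    have : 1 - x ^ 2 ≠ 0 := sub_ne_zero.2 (Ne.symm hx)
    positivity
  unfold siameseMap
  fun_prop (disch := exact hden)

lemma EqPentSol.swap {p : ℝ × ℝ} (h : EqPentSol p) : EqPentSol p.swap := by
  obtain ⟨h₁, h₁', h₂, h₂', e₁, e₂⟩ := h
  exact ⟨h₂, h₂', h₁, h₁', e₂, e₁⟩

lemma eqPentSol_of_siameseMap_siameseMap_eq {x : ℝ} (hx : x ∈ Ioo 0 (√3 / 2))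
    (hfx : siameseMap x ∈ Ioo 0 (√3 / 2)) (hcycle : siameseMap (siameseMap x) = x) :
    EqPentSol (x, siameseMap x) :=
  ⟨hx.1, hx.2, hfx.1, hfx.2, rfl, hcycle.symm⟩

lemma half_lt_sqrt_three_div_two : (1 / 2 : ℝ) < √3 / 2 := by
  have : (1 : ℝ) < √3 := by
    rw [Real.lt_sqrt zero_le_one]
    norm_num
  linarith

lemma siameseMap_bounds {x : ℝ} (hx : x ∈ Icc (0.0711 : ℝ) 0.0712) :
    6.9 * x < siameseMap x ∧ siameseMap x ≤ 1 / 2 := by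
  obtain ⟨ha, hb⟩ := hx
  have hx2 : x ^ 2 ≤ 0.0712 ^ 2 := by nlinarith
  have hden : 0 < 2 * (1 - x ^ 2) ^ 2 := by nlinarith
  unfold siameseMap
  rw [lt_div_iff₀ hden, div_le_iff₀ hden]
  constructor
  · nlinarith [mul_nonneg (sub_nonneg.2 ha) (sub_nonneg.2 hb), sq_nonneg x]
  · nlinarith [sq_nonneg x]

lemma exists_siameseMap_period_two :
    ∃ x ∈ Icc (0.0711 : ℝ) 0.0712, siameseMap (siameseMap x) = x := by
  have hcont : ContinuousOn (fun x ↦ siameseMap (siameseMap x) - x) (Icc 0.0711 0.0712) := by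
    intro x hx
    obtain ⟨hgt, hle⟩ := siameseMap_bounds hx
    have hx2 : x ^ 2 ≠ 1 := by nlinarith [hx.1, hx.2]
    have hfx2 : siameseMap x ^ 2 ≠ 1 := by nlinarith [hx.1]
    refine ContinuousAt.continuousWithinAt ?_
    exact ((continuousAt_siameseMap hfx2).comp (continuousAt_siameseMap hx2)).sub continuousAt_id
  have hsign : (0 : ℝ) ∈ Icc (siameseMap (siameseMap 0.0712) - 0.0712)
      (siameseMap (siameseMap 0.0711) - 0.0711) := by
    norm_num [siameseMap]
  obtain ⟨x, hx, hroot⟩ := intermediate_value_Icc' (by norm_num) hcont hsign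
  exact ⟨x, hx, sub_eq_zero.1 hroot⟩

/-- The relative variation in the heights among the isomeric equilateral
pentagonal Siamese dipyramids exceeds 5.9. -/
theorem eq_pent_siamese_height_variation :
    ∃ p q : ℝ × ℝ, EqPentSol p ∧ EqPentSol q ∧ (q.1 - p.1) / p.1 > 5.9 := by
  obtain ⟨x, hxI, hcycle⟩ := exists_siameseMap_period_two
  obtain ⟨hgt, hle⟩ := siameseMap_bounds hxI
  have hx0 : 0 < x := by linarith [hxI.1]
  have hsqrt := half_lt_sqrt_three_div_two
  have hsol : EqPentSol (x, siameseMap x) :=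
    eqPentSol_of_siameseMap_siameseMap_eq ⟨hx0, by linarith [hxI.2]⟩
      ⟨by linarith, by linarith⟩ hcycle
  refine ⟨(x, siameseMap x), (siameseMap x, x), hsol, hsol.swap, ?_⟩
  rw [gt_iff_lt, lt_div_iff₀ hx0]
  linarith
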